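/- arXiv:2605.14140 — 3 statements merged into one kernel-verified Lean document; each statement's English description precedes it below -/
import Mathlib

section
/- Let p be an odd prime, n ≥ 1, 1 ≤ x ≤ p−1, y ∈ ℕ with 1 ≤ x + yp ≤ np² − 1. For i ≥ 1 set dᵢ = (i−1)·n·p·x + x + y·p, and in ZMod (np³) set Rᵢ = {p, np³ − p} ∪ {k·np² + dᵢ : 0 ≤ k ≤ p−1} ∪ {k·np² − dᵢ : 0 ≤ k ≤ p−1}. Then for all i, j ≥ 1, the image of the set Rᵢ under Θ_{np³, p, jn} equals R_{i+j} (as subsets of ZMod (np³); note R_{i+p} = Rᵢ, so the index may be read modulo p). -/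
/-! Θ = Θ_{np³,p,jn} adds `r·jnp` to a point whose residue mod `p` is `r`, so it fixes the two
multiples `±p` of `p`. The points `k·np² + dᵢ` have residue `x` and are shifted by `jnpx`, which
turns `dᵢ` into `d_{i+j}`. The points `k·np² − dᵢ` have residue `p − x` and are shifted by
`jnp² − jnpx`, which turns them into `(k + j)·np² − d_{i+j}`; as `p·np² = np³`, the index `k` only
matters modulo `p`, and the shift `k ↦ k + j` permutes the branch. -/

/-- The transformation Θ_{n,m,t} : ZMod n → ZMod n, sending x to x + j·t·m where
j is the remainder of the canonical representative of x modulo m. -/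
def theta (n m t : ℕ) (x : ZMod n) : ZMod n :=
  x + (((x.val % m) * t * m : ℕ) : ZMod n)

/-- dᵢ = (i−1)·n·p·x + x + y·p. -/
def dIdx (n p x y i : ℕ) : ℕ := (i - 1) * n * p * x + x + y * p

/-- Rᵢ = {p, np³ − p} ∪ {k·np² + dᵢ : 0 ≤ k ≤ p−1} ∪ {k·np² − dᵢ : 0 ≤ k ≤ p−1}
as a subset of ZMod (np³). -/
def Rconn (n p x y i : ℕ) : Set (ZMod (n * p ^ 3)) :=
  {((p : ℕ) : ZMod (n * p ^ 3)), ((n * p ^ 3 - p : ℕ) : ZMod (n * p ^ 3))} ∪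
  {z | ∃ k ≤ p - 1, z = ((k * (n * p ^ 2) + dIdx n p x y i : ℕ) : ZMod (n * p ^ 3))} ∪
  {z | ∃ k ≤ p - 1, z = ((k * (n * p ^ 2) : ℕ) : ZMod (n * p ^ 3)) -
        ((dIdx n p x y i : ℕ) : ZMod (n * p ^ 3))}

namespace Function.Periodic

variable {α : Type*} {f : ℕ → α} {a : ℕ}

theorem setOf_exists_le_pred_eq_range (hf : Periodic f a) (ha : 0 < a) :
    {z | ∃ k ≤ a - 1, z = f k} = Set.range f := by
  ext z
  constructor
  · rintro ⟨k, -, rfl⟩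
    exact ⟨k, rfl⟩
  · rintro ⟨k, rfl⟩
    exact ⟨k % a, Nat.le_pred_of_lt (Nat.mod_lt k ha), (hf.map_mod_nat k).symm⟩

theorem range_comp_add_right (hf : Periodic f a) (ha : 0 < a) (j : ℕ) :
    Set.range (fun k => f (k + j)) = Set.range f := by
  refine subset_antisymm (Set.range_comp_subset_range _ f) ?_
  rintro _ ⟨k, rfl⟩
  refine ⟨k + (a - 1) * j, ?_⟩
  have hk : k + (a - 1) * j + j = k + j * a := by
    obtain ⟨b, rfl⟩ : ∃ b, a = b + 1 := ⟨a - 1, by omega⟩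
    rw [Nat.add_sub_cancel]
    ring
  show f (k + (a - 1) * j + j) = f k
  rw [hk]
  exact hf.nat_mul j k

end Function.Periodic

namespace ZMod

theorem val_neg_natCast_of_lt {p x : ℕ} (hx0 : 0 < x) (hxp : x < p) :
    (-(x : ZMod p)).val = p - x := by
  have : NeZero p := ⟨by omega⟩
  have hx : (x : ZMod p).val = x := val_cast_of_lt hxp
  rw [neg_val, if_neg (fun h => by simp [h] at hx; omega), hx]

end ZMod

section Theta

variable {n m : ℕ}

theorem theta_eq_add_residue [NeZero n] (h : m ∣ n) (t : ℕ) (z : ZMod n) :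
    theta n m t z = z + (((ZMod.castHom h (ZMod m) z).val * t * m : ℕ) : ZMod n) := by
  rw [theta, ZMod.castHom_apply, ← ZMod.natCast_val, ZMod.val_natCast]

theorem theta_natCast_of_dvd (h : m ∣ n) (t : ℕ) {a : ℕ} (ha : m ∣ a) :
    theta n m t (a : ZMod n) = a := by
  rw [theta, ZMod.val_natCast, Nat.mod_mod_of_dvd a h, Nat.mod_eq_zero_of_dvd ha]
  simp

end Theta

section Branches

variable {n p x y : ℕ}

def posBranch (n p x y i k : ℕ) : ZMod (n * p ^ 3) :=
  ((k * (n * p ^ 2) + dIdx n p x y i : ℕ) : ZMod (n * p ^ 3))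

def negBranch (n p x y i k : ℕ) : ZMod (n * p ^ 3) :=
  ((k * (n * p ^ 2) : ℕ) : ZMod (n * p ^ 3)) - ((dIdx n p x y i : ℕ) : ZMod (n * p ^ 3))

theorem dIdx_add {i : ℕ} (hi : 1 ≤ i) (j : ℕ) :
    dIdx n p x y (i + j) = dIdx n p x y i + j * n * p * x := by
  rw [dIdx, dIdx, show i + j - 1 = i - 1 + j by omega]
  ring

theorem natCast_dIdx_zmod (i : ℕ) : ((dIdx n p x y i : ℕ) : ZMod p) = x := by
  simp [dIdx]

theorem natCast_mul_add_period (k c : ℕ) :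
    (((k + p) * (n * p ^ 2) + c : ℕ) : ZMod (n * p ^ 3)) =
      ((k * (n * p ^ 2) + c : ℕ) : ZMod (n * p ^ 3)) := by
  have h : ((n * p ^ 3 : ℕ) : ZMod (n * p ^ 3)) = 0 := ZMod.natCast_self _
  push_cast at h ⊢
  linear_combination h

theorem periodic_posBranch (i : ℕ) : Function.Periodic (posBranch n p x y i) p :=
  fun k => natCast_mul_add_period k _

theorem periodic_negBranch (i : ℕ) : Function.Periodic (negBranch n p x y i) p :=
  fun k => by
    have h := natCast_mul_add_period (n := n) (p := p) k 0
    simp only [add_zero] at h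
    rw [negBranch, negBranch, h]

theorem Rconn_eq_union_range (hp : 0 < p) (i : ℕ) :
    Rconn n p x y i = {((p : ℕ) : ZMod (n * p ^ 3)), ((n * p ^ 3 - p : ℕ) : ZMod (n * p ^ 3))} ∪
      Set.range (posBranch n p x y i) ∪ Set.range (negBranch n p x y i) := by
  show _ ∪ {z | ∃ k ≤ p - 1, z = posBranch n p x y i k} ∪
    {z | ∃ k ≤ p - 1, z = negBranch n p x y i k} = _
  rw [(periodic_posBranch i).setOf_exists_le_pred_eq_range hp,
    (periodic_negBranch i).setOf_exists_le_pred_eq_range hp]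

theorem dvd_mul_pow_three : p ∣ n * p ^ 3 := dvd_mul_of_dvd_right (dvd_pow_self p three_ne_zero) n

theorem castHom_posBranch (i k : ℕ) :
    ZMod.castHom dvd_mul_pow_three (ZMod p) (posBranch n p x y i k) = x := by
  rw [posBranch, map_natCast, Nat.cast_add, natCast_dIdx_zmod]
  simp

theorem castHom_negBranch (i k : ℕ) :
    ZMod.castHom dvd_mul_pow_three (ZMod p) (negBranch n p x y i k) = -x := by
  rw [negBranch, map_sub, map_natCast, map_natCast, natCast_dIdx_zmod]
  simp

theorem theta_comp_posBranch (hn : 0 < n) (hxp : x < p) {i : ℕ} (hi : 1 ≤ i) (j : ℕ) :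
    theta (n * p ^ 3) p (j * n) ∘ posBranch n p x y i = posBranch n p x y (i + j) := by
  have : NeZero (n * p ^ 3) := NeZero.of_pos (Nat.mul_pos hn (pow_pos (by omega) 3))
  funext k
  rw [Function.comp_apply, theta_eq_add_residue dvd_mul_pow_three, castHom_posBranch,
    ZMod.val_cast_of_lt hxp, posBranch, posBranch, dIdx_add hi]
  push_cast
  ring

theorem theta_comp_negBranch (hn : 0 < n) (hx0 : 0 < x) (hxp : x < p) {i : ℕ} (hi : 1 ≤ i)
    (j : ℕ) : theta (n * p ^ 3) p (j * n) ∘ negBranch n p x y i =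
      fun k => negBranch n p x y (i + j) (k + j) := by
  have : NeZero (n * p ^ 3) := NeZero.of_pos (Nat.mul_pos hn (pow_pos (by omega) 3))
  funext k
  rw [Function.comp_apply, theta_eq_add_residue dvd_mul_pow_three, castHom_negBranch,
    ZMod.val_neg_natCast_of_lt hx0 hxp, negBranch, negBranch, dIdx_add hi]
  push_cast [Nat.cast_sub hxp.le]
  ring

end Branches

theorem theta_image_Rconn_general (p n x y : ℕ) (hn : 1 ≤ n)
    (hx1 : 1 ≤ x) (hx2 : x ≤ p - 1) :
    ∀ i j : ℕ, 1 ≤ i → 1 ≤ j →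
      theta (n * p ^ 3) p (j * n) '' Rconn n p x y i = Rconn n p x y (i + j) := by
  intro i j hi _
  have hxp : x < p := by omega
  have hp : 0 < p := by omega
  have hp_dvd : p ∣ n * p ^ 3 := dvd_mul_pow_three
  rw [Rconn_eq_union_range hp, Rconn_eq_union_range hp, Set.image_union, Set.image_union,
    Set.image_pair, theta_natCast_of_dvd hp_dvd _ dvd_rfl,
    theta_natCast_of_dvd hp_dvd _ (Nat.dvd_sub hp_dvd dvd_rfl), ← Set.range_comp,
    ← Set.range_comp, theta_comp_posBranch hn hxp hi, theta_comp_negBranch hn hx1 hxp hi,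
    (periodic_negBranch _).range_comp_add_right hp]

theorem theta_image_Rconn (p n x y : ℕ) (hp : p.Prime) (hodd : Odd p) (hn : 1 ≤ n)
    (hx1 : 1 ≤ x) (hx2 : x ≤ p - 1) (hxy1 : 1 ≤ x + y * p) (hxy2 : x + y * p ≤ n * p ^ 2 - 1) :
    ∀ i j : ℕ, 1 ≤ i → 1 ≤ j →
      theta (n * p ^ 3) p (j * n) '' Rconn n p x y i = Rconn n p x y (i + j) :=
  theta_image_Rconn_general p n x y hn hx1 hx2
end

section
/- Let p be an odd prime, n ≥ 1, 1 ≤ x ≤ p−1, y ∈ ℕ with 1 ≤ x + yp ≤ np² − 1. For i ≥ 1 set dᵢ = (i−1)·n·p·x + x + y·p, and in ZMod (np³) set Rᵢ = {p, np³ − p} ∪ {k·np² + dᵢ : 0 ≤ k ≤ p−1} ∪ {k·np² − dᵢ : 0 ≤ k ≤ p−1}. Then for all i, j ≥ 1, the bijection Θ_{np³, p, jn} is an isomorphism of simple graphs from C_{np³}(Rᵢ) onto C_{np³}(R_{i+j}); that is, for all a, b ∈ ZMod (np³), a − b ∈ Rᵢ if and only if Θ_{np³,p,jn}(a) − Θ_{np³,p,jn}(b)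 ∈ R_{i+j}. In particular the p circulant graphs C_{np³}(R₁), …, C_{np³}(R_p) are pairwise isomorphic. -/
/-- Resolve an integer congruence with bounds. -/
lemma resolve_delta (p δ e : ℤ) (hp : 0 < p) (h1 : -p < δ) (h2 : δ < p)
    (he1 : 0 ≤ e) (he2 : e < p) (hd : p ∣ δ - e) : δ = e ∨ δ = e - p := by
  obtain ⟨q, hq⟩ := hd
  have h3 : p * q < p * 1 := by linarith
  have h4 : p * (-2) < p * q := by linarith
  have h5 : q < 1 := lt_of_mul_lt_mul_left h3 hp.le
  have h6 : -2 < q := lt_of_mul_lt_mul_left h4 hp.le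
  have hq01 : q = 0 ∨ q = -1 := by omega
  rcases hq01 with h | h <;> subst h <;> [left; right] <;> linarith

/-- Any integer multiple of np² in ZMod (np³) is k·np² for some 0 ≤ k ≤ p−1. -/
lemma coset_eq (n p : ℕ) (hp : 0 < p) (m : ℤ) :
    ∃ k ≤ p - 1, ((k * (n * p ^ 2) : ℕ) : ZMod (n * p ^ 3)) =
      (m : ZMod (n * p ^ 3)) * ((n * p ^ 2 : ℕ) : ZMod (n * p ^ 3)) := by
  have hpz : (0:ℤ) < (p:ℤ) := by exact_mod_cast hp
  have h1 : 0 ≤ m % p := Int.emod_nonneg m hpz.ne'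
  have h2 : m % p < p := Int.emod_lt_of_pos m hpz
  refine ⟨(m % p).toNat, by omega, ?_⟩
  have hz : (n : ZMod (n * p ^ 3)) * (p : ZMod (n * p ^ 3)) ^ 3 = 0 := by
    have h := ZMod.natCast_self (n * p ^ 3)
    push_cast at h
    exact h
  have h3 : ((m : ℤ) : ZMod (n * p ^ 3)) =
      ((p * (m / p) + m % p : ℤ) : ZMod (n * p ^ 3)) := by
    rw [Int.mul_ediv_add_emod]
  have ht : (((m % p).toNat : ℕ) : ZMod (n * p ^ 3)) = ((m % p : ℤ) : ZMod (n * p ^ 3)) := by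
    rw [← Int.cast_natCast, Int.toNat_of_nonneg h1]
  push_cast at h3 ⊢
  rw [ht, h3]
  push_cast
  linear_combination (-((m / p : ℤ) : ZMod (n * p ^ 3))) * hz

/-- Normal form of membership in `Rconn`. -/
lemma mem_Rconn (n p x y i : ℕ) (hp : 0 < p) (hpN : p ≤ n * p ^ 3)
    (z : ZMod (n * p ^ 3)) :
    z ∈ Rconn n p x y i ↔
      z = ((p : ℕ) : ZMod (n * p ^ 3)) ∨ z = -((p : ℕ) : ZMod (n * p ^ 3)) ∨
      (∃ m : ℤ, z = (m : ZMod (n * p ^ 3)) * ((n * p ^ 2 : ℕ) : ZMod (n * p ^ 3)) +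
        ((dIdx n p x y i : ℕ) : ZMod (n * p ^ 3))) ∨
      (∃ m : ℤ, z = (m : ZMod (n * p ^ 3)) * ((n * p ^ 2 : ℕ) : ZMod (n * p ^ 3)) -
        ((dIdx n p x y i : ℕ) : ZMod (n * p ^ 3))) := by
  have hneg : ((n * p ^ 3 - p : ℕ) : ZMod (n * p ^ 3)) = -((p:ℕ) : ZMod (n * p ^ 3)) := by
    rw [Nat.cast_sub hpN, ZMod.natCast_self]; ring
  simp only [Rconn, Set.mem_union, Set.mem_insert_iff, Set.mem_singleton_iff,
    Set.mem_setOf_eq, hneg]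
  constructor
  · rintro (((h | h) | ⟨k, hk, h⟩) | ⟨k, hk, h⟩)
    · exact Or.inl h
    · exact Or.inr (Or.inl h)
    · refine Or.inr (Or.inr (Or.inl ⟨(k:ℤ), ?_⟩))
      rw [h]; push_cast; ring
    · refine Or.inr (Or.inr (Or.inr ⟨(k:ℤ), ?_⟩))
      rw [h]; push_cast; ring
  · rintro (h | h | ⟨m, h⟩ | ⟨m, h⟩)
    · exact Or.inl (Or.inl (Or.inl h))
    · exact Or.inl (Or.inl (Or.inr h))
    · obtain ⟨k, hk, hke⟩ := coset_eq n p hp m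
      refine Or.inl (Or.inr ⟨k, hk, ?_⟩)
      rw [h, ← hke]; push_cast; ring
    · obtain ⟨k, hk, hke⟩ := coset_eq n p hp m
      refine Or.inr ⟨k, hk, ?_⟩
      rw [h, ← hke]

/-- Θ_{np³,p,jn} is a graph isomorphism from C_{np³}(Rᵢ) onto C_{np³}(R_{i+j});
in particular C_{np³}(R₁), …, C_{np³}(R_p) are pairwise isomorphic. -/
theorem theta_graph_iso_Rconn (p n x y : ℕ) (hp : p.Prime) (hodd : Odd p) (hn : 1 ≤ n)
    (hx1 : 1 ≤ x) (hx2 : x ≤ p - 1) (hxy1 : 1 ≤ x + y * p) (hxy2 : x + y * p ≤ n * p ^ 2 - 1) :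
    ∀ i j : ℕ, 1 ≤ i → 1 ≤ j →
      ∀ a b : ZMod (n * p ^ 3),
        a - b ∈ Rconn n p x y i ↔
          theta (n * p ^ 3) p (j * n) a - theta (n * p ^ 3) p (j * n) b ∈
            Rconn n p x y (i + j) := by
  intro i j hi hj a b
  have hp2 := hp.two_le
  have hp0 : 0 < p := hp.pos
  haveI : NeZero p := ⟨hp0.ne'⟩
  have hpN : p ≤ n * p ^ 3 :=
    le_trans (Nat.le_self_pow (by norm_num) p) (Nat.le_mul_of_pos_left _ hn)
  haveI : NeZero (n * p ^ 3) := ⟨by positivity⟩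
  -- the reduction homomorphism to ZMod p
  have hdvd : p ∣ n * p ^ 3 := ⟨n * p ^ 2, by ring⟩
  set φ : ZMod (n * p ^ 3) →+* ZMod p := ZMod.castHom hdvd (ZMod p) with hφdef
  have hφval : ∀ c : ZMod (n * p ^ 3), φ c = ((c.val % p : ℕ) : ZMod p) := by
    intro c
    have h1 : ((c.val : ℕ) : ZMod (n * p ^ 3)) = c := ZMod.natCast_rightInverse c
    calc φ c = φ ((c.val : ℕ) : ZMod (n * p ^ 3)) := by rw [h1]
      _ = ((c.val : ℕ) : ZMod p) := map_natCast φ _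
      _ = ((c.val % p : ℕ) : ZMod p) := (ZMod.natCast_mod _ _).symm
  set A : ℕ := a.val % p with hA
  set B : ℕ := b.val % p with hB
  set δ : ℤ := (A : ℤ) - (B : ℤ) with hδdef
  have hav : A < p := Nat.mod_lt _ hp0
  have hbv : B < p := Nat.mod_lt _ hp0
  have hδ1 : -(p:ℤ) < δ := by omega
  have hδ2 : δ < (p:ℤ) := by omega
  have hφδ : ((δ : ℤ) : ZMod p) = φ (a - b) := by
    rw [map_sub, hφval a, hφval b, hδdef]; push_cast; ring
  have htheta : theta (n * p ^ 3) p (j * n) a - theta (n * p ^ 3) p (j * n) b =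
      (a - b) + ((δ * (j * n * p) : ℤ) : ZMod (n * p ^ 3)) := by
    simp only [theta, ← hA, ← hB, hδdef]; push_cast; ring
  have hφnp2 : φ ((n * p ^ 2 : ℕ) : ZMod (n * p ^ 3)) = 0 := by
    rw [map_natCast]; push_cast; simp [ZMod.natCast_self]
  have hφd : ∀ i' : ℕ, φ ((dIdx n p x y i' : ℕ) : ZMod (n * p ^ 3)) = ((x:ℕ) : ZMod p) := by
    intro i'
    rw [map_natCast]
    simp only [dIdx]
    push_cast
    simp [ZMod.natCast_self]
  have hφp : φ (((p:ℕ) : ZMod (n * p ^ 3))) = 0 := by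
    rw [map_natCast]; simp [ZMod.natCast_self]
  have hφE : φ (((δ * (j * n * p) : ℤ) : ZMod (n * p ^ 3))) = 0 := by
    rw [map_intCast]; push_cast; simp [ZMod.natCast_self]
  have hxZ1 : (0:ℤ) ≤ (x:ℤ) := by positivity
  have hxZ2 : (x:ℤ) < (p:ℤ) := by exact_mod_cast (by omega : x < p)
  have hxZ3 : (0:ℤ) ≤ (p:ℤ) - (x:ℤ) := by omega
  have hxZ4 : (p:ℤ) - (x:ℤ) < (p:ℤ) := by omega
  -- d_{i+j} = dᵢ + jnpx
  have hdd : (dIdx n p x y (i + j) : ℕ) = dIdx n p x y i + j * n * p * x := by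
    simp only [dIdx]
    have h1 : i + j - 1 = (i - 1) + j := by omega
    rw [h1]; ring
  -- a convenient divisibility extractor
  have hdvdδ : ∀ e : ℤ, ((δ - e : ℤ) : ZMod p) = 0 → (p:ℤ) ∣ δ - e := by
    intro e h
    exact (ZMod.intCast_zmod_eq_zero_iff_dvd _ p).mp h
  rw [htheta, mem_Rconn n p x y i hp0 hpN, mem_Rconn n p x y (i + j) hp0 hpN]
  constructor
  · rintro (h | h | ⟨m, hm⟩ | ⟨m, hm⟩)
    · -- a - b = p : δ = 0
      have hφc : φ (a - b) = 0 := by rw [h]; exact hφp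
      have hd0 : (p:ℤ) ∣ δ - 0 := by
        apply hdvdδ; push_cast; rw [hφδ, hφc]; ring
      have hδ0 : δ = 0 := by
        rcases resolve_delta p δ 0 (by exact_mod_cast hp0) hδ1 hδ2 le_rfl
          (by exact_mod_cast hp0) hd0 with h' | h' <;> omega
      left; rw [h, hδ0]; push_cast; ring
    · have hφc : φ (a - b) = 0 := by rw [h, map_neg, hφp, neg_zero]
      have hd0 : (p:ℤ) ∣ δ - 0 := by
        apply hdvdδ; push_cast; rw [hφδ, hφc]; ring
      have hδ0 : δ = 0 := by
        rcases resolve_delta p δ 0 (by exact_mod_cast hp0) hδ1 hδ2 le_rfl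
          (by exact_mod_cast hp0) hd0 with h' | h' <;> omega
      right; left; rw [h, hδ0]; push_cast; ring
    · -- a - b = m·np² + dᵢ : δ = x or δ = x - p
      have hφc : φ (a - b) = ((x:ℕ) : ZMod p) := by
        rw [hm, map_add, map_mul, map_intCast, hφnp2, hφd]; ring
      have hdx : (p:ℤ) ∣ δ - (x:ℤ) := by
        apply hdvdδ; push_cast; rw [hφδ, hφc]; push_cast; ring
      rcases resolve_delta p δ (x:ℤ) (by exact_mod_cast hp0) hδ1 hδ2 hxZ1 hxZ2 hdx
        with hδx | hδx
      · refine Or.inr (Or.inr (Or.inl ⟨m, ?_⟩))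
        rw [hm, hδx, hdd]; push_cast; ring
      · refine Or.inr (Or.inr (Or.inl ⟨m - j, ?_⟩))
        rw [hm, hδx, hdd]; push_cast; ring
    · -- a - b = m·np² − dᵢ : δ = −x or δ = p − x
      have hφc : φ (a - b) = -((x:ℕ) : ZMod p) := by
        rw [hm, map_sub, map_mul, map_intCast, hφnp2, hφd]; ring
      have hdx : (p:ℤ) ∣ δ - ((p:ℤ) - (x:ℤ)) := by
        apply hdvdδ; push_cast
        rw [hφδ, hφc, ZMod.natCast_self]; ring
      rcases resolve_delta p δ ((p:ℤ) - (x:ℤ)) (by exact_mod_cast hp0) hδ1 hδ2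
        hxZ3 hxZ4 hdx with hδx | hδx
      · refine Or.inr (Or.inr (Or.inr ⟨m + j, ?_⟩))
        rw [hm, hδx, hdd]; push_cast; ring
      · refine Or.inr (Or.inr (Or.inr ⟨m, ?_⟩))
        rw [hm, hδx, hdd]; push_cast; ring
  · rintro (h | h | ⟨m, hm⟩ | ⟨m, hm⟩)
    · have hφc : φ (a - b) = 0 := by
        have h' := congrArg φ h
        rw [map_add, hφE, add_zero, hφp] at h'
        exact h'
      have hd0 : (p:ℤ) ∣ δ - 0 := by
        apply hdvdδ; push_cast; rw [hφδ, hφc]; ring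
      have hδ0 : δ = 0 := by
        rcases resolve_delta p δ 0 (by exact_mod_cast hp0) hδ1 hδ2 le_rfl
          (by exact_mod_cast hp0) hd0 with h' | h' <;> omega
      left
      rw [hδ0] at h; simpa using h
    · have hφc : φ (a - b) = 0 := by
        have h' := congrArg φ h
        rw [map_add, hφE, add_zero, map_neg, hφp, neg_zero] at h'
        exact h'
      have hd0 : (p:ℤ) ∣ δ - 0 := by
        apply hdvdδ; push_cast; rw [hφδ, hφc]; ring
      have hδ0 : δ = 0 := by
        rcases resolve_delta p δ 0 (by exact_mod_cast hp0) hδ1 hδ2 le_rfl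
          (by exact_mod_cast hp0) hd0 with h' | h' <;> omega
      right; left
      rw [hδ0] at h; simpa using h
    · have hφc : φ (a - b) = ((x:ℕ) : ZMod p) := by
        have h2 : φ (a - b) = φ ((m : ZMod (n * p ^ 3)) * ((n * p ^ 2 : ℕ) : ZMod (n * p ^ 3)) +
            ((dIdx n p x y (i + j) : ℕ) : ZMod (n * p ^ 3))) := by
          rw [← hm, map_add, hφE, add_zero]
        rw [h2, map_add, map_mul, map_intCast, hφnp2, hφd]; ring
      have hdx : (p:ℤ) ∣ δ - (x:ℤ) := by
        apply hdvdδ; push_cast; rw [hφδ, hφc]; push_cast; ring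
      rcases resolve_delta p δ (x:ℤ) (by exact_mod_cast hp0) hδ1 hδ2 hxZ1 hxZ2 hdx
        with hδx | hδx
      · refine Or.inr (Or.inr (Or.inl ⟨m, ?_⟩))
        rw [hδx, hdd] at hm
        push_cast at hm ⊢
        linear_combination hm
      · refine Or.inr (Or.inr (Or.inl ⟨m + j, ?_⟩))
        rw [hδx, hdd] at hm
        push_cast at hm ⊢
        linear_combination hm
    · have hφc : φ (a - b) = -((x:ℕ) : ZMod p) := by
        have h2 : φ (a - b) = φ ((m : ZMod (n * p ^ 3)) * ((n * p ^ 2 : ℕ) : ZMod (n * p ^ 3)) -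
            ((dIdx n p x y (i + j) : ℕ) : ZMod (n * p ^ 3))) := by
          rw [← hm, map_add, hφE, add_zero]
        rw [h2, map_sub, map_mul, map_intCast, hφnp2, hφd]; ring
      have hdx : (p:ℤ) ∣ δ - ((p:ℤ) - (x:ℤ)) := by
        apply hdvdδ; push_cast
        rw [hφδ, hφc, ZMod.natCast_self]; ring
      rcases resolve_delta p δ ((p:ℤ) - (x:ℤ)) (by exact_mod_cast hp0) hδ1 hδ2
        hxZ3 hxZ4 hdx with hδx | hδx
      · refine Or.inr (Or.inr (Or.inr ⟨m - j, ?_⟩))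
        rw [hδx, hdd] at hm
        push_cast at hm ⊢
        linear_combination hm
      · refine Or.inr (Or.inr (Or.inr ⟨m, ?_⟩))
        rw [hδx, hdd] at hm
        push_cast at hm ⊢
        linear_combination hm
end

section
/- Let p be an odd prime, n ≥ 1, 1 ≤ x ≤ p−1, y ∈ ℕ with 1 ≤ x + yp ≤ np² − 1. For i ≥ 1 set dᵢ = (i−1)·n·p·x + x + y·p, and in ZMod (np³) set Rᵢ = {p, np³ − p} ∪ {k·np² + dᵢ : 0 ≤ k ≤ p−1} ∪ {k·np² − dᵢ : 0 ≤ k ≤ p−1}. Then for all i ≥ 1 and 1 ≤ j ≤ p−1, there is no unit u of ZMod (np³) with u·Rᵢ = R_{i+j}; that is, the p pairwise isomorphic circulant graphs C_{np³}(R₁), …, C_{np³}(R_p) are pairwise not Adam's (Type-1) isomorphic. -/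
/-- The p pairwise isomorphic circulant graphs C_{np³}(R₁), …, C_{np³}(R_p) are pairwise
not Adam's (Type-1) isomorphic: no unit u of ZMod (np³) satisfies u·Rᵢ = R_{i+j}. -/
theorem not_adams_iso_Rconn (p n x y : ℕ) (hp : p.Prime) (hodd : Odd p) (hn : 1 ≤ n)
    (hx1 : 1 ≤ x) (hx2 : x ≤ p - 1) (hxy1 : 1 ≤ x + y * p) (hxy2 : x + y * p ≤ n * p ^ 2 - 1) :
    ∀ i j : ℕ, 1 ≤ i → 1 ≤ j → j ≤ p - 1 →
      ¬ ∃ u : (ZMod (n * p ^ 3))ˣ,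
        (fun r => (u : ZMod (n * p ^ 3)) * r) '' Rconn n p x y i =
          Rconn n p x y (i + j) := by
  intro i j hi hj hjp
  rintro ⟨u, hu⟩
  have hp0 : 0 < p := hp.pos
  have hp2 : 2 ≤ p := hp.two_le
  have hp3 : 3 ≤ p := by rcases hodd with ⟨t, ht⟩; omega
  haveI : NeZero (n * p ^ 3) := ⟨by positivity⟩
  haveI : NeZero (n * p ^ 2) := ⟨by positivity⟩
  haveI : NeZero p := ⟨hp0.ne'⟩
  have hMN : n * p ^ 2 ∣ n * p ^ 3 := ⟨p, by ring⟩
  have hpM : p ∣ n * p ^ 2 := ⟨n * p, by ring⟩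
  have hpN : p ∣ n * p ^ 3 := hpM.trans hMN
  have hpx : ¬ p ∣ x := by intro h; have := Nat.le_of_dvd hx1 h; omega
  have hpj : ¬ p ∣ j := by intro h; have := Nat.le_of_dvd hj h; omega
  have hdvd_d : ∀ m, ¬ p ∣ dIdx n p x y m := by
    intro m h
    have h1 : dIdx n p x y m = p * ((m - 1) * n * x + y) + x := by unfold dIdx; ring
    rw [h1] at h
    exact hpx ((Nat.dvd_add_right (dvd_mul_right p _)).mp h)
  set ψ := ZMod.castHom hMN (ZMod (n * p ^ 2)) with hψdef
  set π := ZMod.castHom hpM (ZMod p) with hπdef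
  set π' := ZMod.castHom hpN (ZMod p) with hπ'def
  -- kernel lemma
  have hker : ∀ z : ZMod (n * p ^ 3), (↑p : ZMod (n * p ^ 3)) * z = 0 → ψ z = 0 := by
    intro z h
    have hz : ((z.val : ℕ) : ZMod (n * p ^ 3)) = z := ZMod.natCast_zmod_val z
    rw [← hz, ← Nat.cast_mul, ZMod.natCast_eq_zero_iff] at h
    have hMz : n * p ^ 2 ∣ z.val := by
      rcases h with ⟨c, hc⟩
      refine ⟨c, Nat.eq_of_mul_eq_mul_left hp0 ?_⟩
      calc p * z.val = n * p ^ 3 * c := hc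
        _ = p * (n * p ^ 2 * c) := by ring
    rw [← hz, map_natCast, ZMod.natCast_eq_zero_iff]
    exact hMz
  have himg : ∀ z ∈ Rconn n p x y i,
      (u : ZMod (n * p ^ 3)) * z ∈ Rconn n p x y (i + j) := by
    intro z hz; rw [← hu]; exact ⟨z, hz, rfl⟩
  have hdne : ∀ m, ((dIdx n p x y m : ℕ) : ZMod p) ≠ 0 := by
    intro m h
    exact hdvd_d m ((ZMod.natCast_eq_zero_iff _ _).mp h)
  have hpleN : p ≤ n * p ^ 3 :=
    le_trans (Nat.le_self_pow (by norm_num) p) (Nat.le_mul_of_pos_left (p ^ 3) hn)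
  -- (N - p : ℕ) casts to -p
  have hNPcast : ((n * p ^ 3 - p : ℕ) : ZMod (n * p ^ 3)) = -((p : ℕ) : ZMod (n * p ^ 3)) := by
    rw [Nat.cast_sub hpleN, ZMod.natCast_self, zero_sub]
  -- π' of k*(np²)+d and of k*(np²)
  have hMp0 : ((n * p ^ 2 : ℕ) : ZMod p) = 0 := by
    rw [ZMod.natCast_eq_zero_iff]; exact hpM
  have hpp0 : ((p : ℕ) : ZMod p) = 0 := ZMod.natCast_self p
  have hcast_add : ∀ k m : ℕ, π' (((k * (n * p ^ 2) + dIdx n p x y m : ℕ)) : ZMod (n * p ^ 3))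
      = ((dIdx n p x y m : ℕ) : ZMod p) := by
    intro k m
    rw [map_natCast, Nat.cast_add, Nat.cast_mul, hMp0, mul_zero, zero_add]
  have hcast_sub : ∀ k m : ℕ, π' (((k * (n * p ^ 2) : ℕ) : ZMod (n * p ^ 3)) -
        ((dIdx n p x y m : ℕ) : ZMod (n * p ^ 3))) = -((dIdx n p x y m : ℕ) : ZMod p) := by
    intro k m
    rw [map_sub, map_natCast, map_natCast, Nat.cast_mul, hMp0, mul_zero, zero_sub]
  -- Step A : u * p = ± p
  have hmemp : ((p : ℕ) : ZMod (n * p ^ 3)) ∈ Rconn n p x y i := by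
    left; left; left; rfl
  have hA := himg _ hmemp
  simp only [Rconn, Set.mem_union, Set.mem_insert_iff, Set.mem_singleton_iff,
    Set.mem_setOf_eq] at hA
  have hεψ : ψ (u : ZMod (n * p ^ 3)) = 1 ∨ ψ (u : ZMod (n * p ^ 3)) = -1 := by
    rcases hA with ((h | h) | ⟨k, hk, h⟩) | ⟨k, hk, h⟩
    · left
      have h0 : (↑p : ZMod (n * p ^ 3)) * ((u : ZMod (n * p ^ 3)) - 1) = 0 := by
        rw [mul_sub, mul_one, mul_comm ((p:ℕ) : ZMod (n * p ^ 3)) (u : ZMod (n * p ^ 3)), h, sub_self]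
      have := hker _ h0
      rw [map_sub, map_one, sub_eq_zero] at this
      exact this
    · right
      rw [hNPcast] at h
      have h0 : (↑p : ZMod (n * p ^ 3)) * ((u : ZMod (n * p ^ 3)) + 1) = 0 := by
        rw [mul_add, mul_one, mul_comm ((p:ℕ) : ZMod (n * p ^ 3)) (u : ZMod (n * p ^ 3)), h, neg_add_cancel]
      have := hker _ h0
      rw [map_add, map_one, add_eq_zero_iff_eq_neg] at this
      exact this
    · exfalso
      have := congrArg π' h
      rw [map_mul, map_natCast, hpp0, mul_zero, hcast_add] at this
      exact hdne _ this.symm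
    · exfalso
      have := congrArg π' h
      rw [map_mul, map_natCast, hpp0, mul_zero, hcast_sub] at this
      rw [eq_comm, neg_eq_zero] at this
      exact hdne _ this
  -- Step B : u * dᵢ ∈ R_{i+j}, project by ψ
  have hmemd : ((dIdx n p x y i : ℕ) : ZMod (n * p ^ 3)) ∈ Rconn n p x y i := by
    left; right
    exact ⟨0, Nat.zero_le _, by norm_num⟩
  have hB := himg _ hmemd
  simp only [Rconn, Set.mem_union, Set.mem_insert_iff, Set.mem_singleton_iff,
    Set.mem_setOf_eq] at hB
  set Di : ZMod (n * p ^ 2) := ((dIdx n p x y i : ℕ) : ZMod (n * p ^ 2)) with hDi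
  set Dj : ZMod (n * p ^ 2) := ((dIdx n p x y (i + j) : ℕ) : ZMod (n * p ^ 2)) with hDj
  have hM0 : ((n * p ^ 2 : ℕ) : ZMod (n * p ^ 2)) = 0 := ZMod.natCast_self _
  have hεDi : ψ (u : ZMod (n * p ^ 3)) * Di = Di ∨
      ψ (u : ZMod (n * p ^ 3)) * Di = -Di := by
    rcases hεψ with h | h <;> rw [h]
    · left; rw [one_mul]
    · right; rw [neg_one_mul]
  have hkey : Di = ((p : ℕ) : ZMod (n * p ^ 2)) ∨ Di = -((p : ℕ) : ZMod (n * p ^ 2)) ∨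
      Di = Dj ∨ Di = -Dj := by
    have hψB : ψ ((u : ZMod (n * p ^ 3)) * ((dIdx n p x y i : ℕ) : ZMod (n * p ^ 3)))
        = ψ (u : ZMod (n * p ^ 3)) * Di := by rw [map_mul, map_natCast]
    rcases hB with ((h | h) | ⟨k, hk, h⟩) | ⟨k, hk, h⟩
    · have := congrArg ψ h
      rw [hψB, map_natCast] at this
      rcases hεDi with he | he
      · left; rw [← he, this]
      · right; left
        rw [← neg_neg Di, ← he, this]
    · have := congrArg ψ h
      rw [hψB, hNPcast, map_neg, map_natCast] at this
      rcases hεDi with he | he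
      · right; left; rw [← he, this]
      · left
        rw [← neg_neg Di, ← he, this, neg_neg]
    · have := congrArg ψ h
      rw [hψB, map_natCast, Nat.cast_add, Nat.cast_mul, hM0, mul_zero, zero_add] at this
      rcases hεDi with he | he
      · right; right; left; rw [← he, this]
      · right; right; right
        rw [← neg_neg Di, ← he, this]
    · have := congrArg ψ h
      rw [hψB, map_sub, map_natCast, map_natCast, Nat.cast_mul, hM0, mul_zero,
        zero_sub] at this
      rcases hεDi with he | he
      · right; right; right; rw [← he, this]
      · right; right; left
        rw [← neg_neg Di, ← he, this, neg_neg]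
  -- now kill the four cases
  rcases hkey with h | h | h | h
  · have := congrArg π h
    rw [hDi, map_natCast, map_natCast, hpp0] at this
    exact hdne i this
  · have := congrArg π h
    rw [hDi, map_natCast, map_neg, map_natCast, hpp0, neg_zero] at this
    exact hdne i this
  · -- Di = Dj : np² ∣ j·n·p·x, impossible
    have hsum : dIdx n p x y (i + j) = dIdx n p x y i + j * (n * p * x) := by
      unfold dIdx
      have h1 : i + j - 1 = (i - 1) + j := by omega
      rw [h1]; ring
    have h0 : ((j * (n * p * x) : ℕ) : ZMod (n * p ^ 2)) = 0 := by
      have := h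
      rw [hDi, hDj, hsum, Nat.cast_add] at this
      exact (add_eq_left.mp this.symm)
    rw [ZMod.natCast_eq_zero_iff] at h0
    rcases h0 with ⟨c, hc⟩
    have hjx : j * x = p * c := by
      have h2 : n * p * (j * x) = n * p * (p * c) := by
        calc n * p * (j * x) = j * (n * p * x) := by ring
          _ = n * p ^ 2 * c := hc
          _ = n * p * (p * c) := by ring
      exact Nat.eq_of_mul_eq_mul_left (by positivity) h2
    rcases (Nat.Prime.dvd_mul hp).mp ⟨c, hjx⟩ with h' | h'
    · exact hpj h'
    · exact hpx h'
  · -- Di = -Dj : p ∣ dᵢ + d_{i+j} = p·B + 2x, impossible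
    have h0 : ((dIdx n p x y i + dIdx n p x y (i + j) : ℕ) : ZMod (n * p ^ 2)) = 0 := by
      rw [Nat.cast_add, ← hDi, ← hDj, h, neg_add_cancel]
    rw [ZMod.natCast_eq_zero_iff] at h0
    have hpd : p ∣ dIdx n p x y i + dIdx n p x y (i + j) := hpM.trans h0
    have hsum : dIdx n p x y i + dIdx n p x y (i + j)
        = p * (((i - 1) + (i + j - 1)) * n * x + 2 * y) + 2 * x := by
      unfold dIdx; ring
    rw [hsum] at hpd
    have h2x : p ∣ 2 * x := (Nat.dvd_add_right (dvd_mul_right p _)).mp hpd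
    rcases (Nat.Prime.dvd_mul hp).mp h2x with h' | h'
    · have := Nat.le_of_dvd (by norm_num) h'; omega
    · exact hpx h'
end
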